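/- arXiv:2410.17857 — 8 statements merged into one kernel-verified Lean document; each statement's English description precedes it below -/
import Mathlib

section
/- Let n ≥ 1, let K be a real positive semidefinite n×n matrix such that every row of K has at most c nonzero entries (c a positive natural number), and let M̂ be a diagonal real n×n matrix with strictly positive diagonal entries d_1,…,d_n. Then for every nonzero vector x ∈ ℝⁿ, the generalized Rayleigh quotient (xᵀKx)/(xᵀM̂x) is at most c · max_{1≤i≤n} K_{ii}/d_i. Combined with the trivial lower bound, max_i K_{ii}/d_i ≤ λ_n(K,M̂) ≤ c · max_i K_{ii}/d_i. -/
/-!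
Testing against a standard basis vector `eᵢ` gives the Rayleigh quotient `Kᵢᵢ / dᵢ`, whence the
lower bound. For the upper bound, positive semidefiniteness of the `2 × 2` principal submatrices
gives `2 xᵢ Kᵢⱼ xⱼ ≤ Kᵢᵢ xᵢ² + Kⱼⱼ xⱼ²`. Summing this over the nonzero entries of `K` only, the
symmetry of `K` lets both halves of the right-hand side be counted along rows, so
`xᵀKx ≤ c ∑ᵢ Kᵢᵢ xᵢ² ≤ c (maxᵢ Kᵢᵢ / dᵢ) xᵀM̂x`.
-/

open Matrix Finset

namespace Matrix

variable {ι : Type*} [Fintype ι]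

theorem PosSemidef.two_mul_mul_apply_mul_le [DecidableEq ι] {K : Matrix ι ι ℝ}
    (hK : K.PosSemidef) (x : ι → ℝ) (i j : ι) :
    2 * (x i * K i j * x j) ≤ K i i * x i ^ 2 + K j j * x j ^ 2 := by
  have h := hK.dotProduct_mulVec_nonneg (Pi.single i (x i) - Pi.single j (x j))
  simp only [star_trivial, sub_dotProduct, dotProduct_sub, mulVec_sub, mulVec_single,
    single_dotProduct, Pi.smul_apply, col_apply, op_smul_eq_mul] at h
  rw [show K j i = K i j from hK.isHermitian.apply i j] at h
  nlinarith

theorem sum_sum_ite_ne_zero_le {K : Matrix ι ι ℝ} {c : ℕ} (hrow : ∀ i, #{j | K i j ≠ 0} ≤ c)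
    {a : ι → ℝ} (ha : ∀ i, 0 ≤ a i) :
    ∑ i, ∑ j, (if K i j ≠ 0 then a i else 0) ≤ c * ∑ i, a i := by
  simp only [sum_ite, sum_const_zero, add_zero, sum_const, nsmul_eq_mul, mul_sum]
  gcongr with i
  · exact ha i
  · exact_mod_cast hrow i

theorem PosSemidef.dotProduct_mulVec_le_of_card_row_support_le [DecidableEq ι]
    {K : Matrix ι ι ℝ} (hK : K.PosSemidef) {c : ℕ} (hrow : ∀ i, #{j | K i j ≠ 0} ≤ c)
    (x : ι → ℝ) : x ⬝ᵥ K *ᵥ x ≤ c * ∑ i, K i i * x i ^ 2 := by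
  set a : ι → ℝ := fun i => K i i * x i ^ 2
  have hsymm : ∑ i, ∑ j, (if K i j ≠ 0 then a j else 0)
      = ∑ i, ∑ j, (if K i j ≠ 0 then a i else 0) := by
    have hK_symm : ∀ i j, K j i = K i j := hK.isHermitian.apply
    rw [sum_comm]
    simp_rw [hK_symm]
  have hsplit : ∀ i j, (if K i j ≠ 0 then (a i + a j) / 2 else 0)
      = (if K i j ≠ 0 then a i else 0) / 2 + (if K i j ≠ 0 then a j else 0) / 2 := by
    intro i j
    split_ifs <;> ring
  calc x ⬝ᵥ K *ᵥ x = ∑ i, ∑ j, x i * K i j * x j := by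
        simp only [dotProduct, mulVec, mul_sum, mul_assoc]
    _ ≤ ∑ i, ∑ j, (if K i j ≠ 0 then (a i + a j) / 2 else 0) := by
        gcongr with i _ j _
        split_ifs with hij
        · linarith [hK.two_mul_mul_apply_mul_le x i j]
        · simp [not_not.1 hij]
    _ = ∑ i, ∑ j, (if K i j ≠ 0 then a i else 0) := by
        simp only [hsplit, sum_add_distrib, ← sum_div, hsymm]
        ring
    _ ≤ c * ∑ i, a i :=
        sum_sum_ite_ne_zero_le hrow fun i => mul_nonneg hK.diag_nonneg (sq_nonneg _)

theorem PosSemidef.div_dotProduct_diagonal_mulVec_le [DecidableEq ι] {K : Matrix ι ι ℝ}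
    (hK : K.PosSemidef) {c : ℕ} (hrow : ∀ i, #{j | K i j ≠ 0} ≤ c) {d : ι → ℝ}
    (hd : ∀ i, 0 < d i) {S : ℝ} (hS : ∀ i, K i i / d i ≤ S) {x : ι → ℝ} (hx : x ≠ 0) :
    (x ⬝ᵥ K *ᵥ x) / (x ⬝ᵥ diagonal d *ᵥ x) ≤ c * S := by
  have hpos : 0 < x ⬝ᵥ diagonal d *ᵥ x := by
    simpa using (posDef_diagonal_iff.2 hd).dotProduct_mulVec_pos hx
  rw [div_le_iff₀ hpos]
  calc x ⬝ᵥ K *ᵥ x ≤ c * ∑ i, K i i * x i ^ 2 :=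
        hK.dotProduct_mulVec_le_of_card_row_support_le hrow x
    _ ≤ c * ∑ i, S * d i * x i ^ 2 := by
        gcongr with i
        exact (div_le_iff₀ (hd i)).1 (hS i)
    _ = c * S * (x ⬝ᵥ diagonal d *ᵥ x) := by
        simp only [dotProduct, mulVec_diagonal, mul_sum]
        exact sum_congr rfl fun i _ => by ring

end Matrix

theorem largest_eig_two_sided_bound_general (n : ℕ) (hn : 1 ≤ n)
    (K : Matrix (Fin n) (Fin n) ℝ) (hK : K.PosSemidef)
    (c : ℕ)
    (hrow : ∀ i, (Finset.univ.filter (fun j => K i j ≠ 0)).card ≤ c)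
    (d : Fin n → ℝ) (hd : ∀ i, 0 < d i) :
    (∀ x : Fin n → ℝ, x ≠ 0 →
        (x ⬝ᵥ K.mulVec x) / (x ⬝ᵥ (Matrix.diagonal d).mulVec x)
          ≤ c * Finset.univ.sup' ⟨⟨0, hn⟩, Finset.mem_univ _⟩ (fun i => K i i / d i)) ∧
    Finset.univ.sup' ⟨⟨0, hn⟩, Finset.mem_univ _⟩ (fun i => K i i / d i)
      ≤ sSup {r : ℝ | ∃ x : Fin n → ℝ, x ≠ 0 ∧
          r = (x ⬝ᵥ K.mulVec x) / (x ⬝ᵥ (Matrix.diagonal d).mulVec x)} ∧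
    sSup {r : ℝ | ∃ x : Fin n → ℝ, x ≠ 0 ∧
        r = (x ⬝ᵥ K.mulVec x) / (x ⬝ᵥ (Matrix.diagonal d).mulVec x)}
      ≤ c * Finset.univ.sup' ⟨⟨0, hn⟩, Finset.mem_univ _⟩ (fun i => K i i / d i) := by
  set S := Finset.univ.sup' ⟨⟨0, hn⟩, Finset.mem_univ _⟩ (fun i => K i i / d i)
  have hupper : ∀ x : Fin n → ℝ, x ≠ 0 →
      (x ⬝ᵥ K *ᵥ x) / (x ⬝ᵥ diagonal d *ᵥ x) ≤ c * S := fun x hx =>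
    hK.div_dotProduct_diagonal_mulVec_le hrow hd
      (fun i => le_sup' (fun i => K i i / d i) (mem_univ i)) hx
  obtain ⟨i, -, hi⟩ := exists_mem_eq_sup' ⟨⟨0, hn⟩, mem_univ _⟩ fun i => K i i / d i
  have hS_mem : ∃ x : Fin n → ℝ, x ≠ 0 ∧ S = (x ⬝ᵥ K *ᵥ x) / (x ⬝ᵥ diagonal d *ᵥ x) :=
    ⟨Pi.single i 1, by simp, by simp [S, hi, mulVec_single]⟩
  have hbdd : ∀ r ∈ {r : ℝ | ∃ x : Fin n → ℝ, x ≠ 0 ∧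
      r = (x ⬝ᵥ K *ᵥ x) / (x ⬝ᵥ diagonal d *ᵥ x)}, r ≤ c * S := by
    rintro _ ⟨x, hx, rfl⟩
    exact hupper x hx
  exact ⟨hupper, le_csSup ⟨_, hbdd⟩ hS_mem, csSup_le ⟨S, hS_mem⟩ hbdd⟩

/-- For a real positive semidefinite `n × n` matrix `K` with at most `c` nonzero
entries per row and a diagonal matrix `M̂ = diagonal d` with strictly positive
diagonal entries, every generalized Rayleigh quotient `(xᵀKx)/(xᵀM̂x)` (for
nonzero `x`) is at most `c * max_i K i i / d i`; combined with the trivial lower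
bound, `max_i K i i / d i ≤ λ_n(K, M̂) ≤ c * max_i K i i / d i`. -/
theorem largest_eig_two_sided_bound (n : ℕ) (hn : 1 ≤ n)
    (K : Matrix (Fin n) (Fin n) ℝ) (hK : K.PosSemidef)
    (c : ℕ) (hc : 0 < c)
    (hrow : ∀ i, (Finset.univ.filter (fun j => K i j ≠ 0)).card ≤ c)
    (d : Fin n → ℝ) (hd : ∀ i, 0 < d i) :
    (∀ x : Fin n → ℝ, x ≠ 0 →
        (x ⬝ᵥ K.mulVec x) / (x ⬝ᵥ (Matrix.diagonal d).mulVec x)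
          ≤ c * Finset.univ.sup' ⟨⟨0, hn⟩, Finset.mem_univ _⟩ (fun i => K i i / d i)) ∧
    Finset.univ.sup' ⟨⟨0, hn⟩, Finset.mem_univ _⟩ (fun i => K i i / d i)
      ≤ sSup {r : ℝ | ∃ x : Fin n → ℝ, x ≠ 0 ∧
          r = (x ⬝ᵥ K.mulVec x) / (x ⬝ᵥ (Matrix.diagonal d).mulVec x)} ∧
    sSup {r : ℝ | ∃ x : Fin n → ℝ, x ≠ 0 ∧
        r = (x ⬝ᵥ K.mulVec x) / (x ⬝ᵥ (Matrix.diagonal d).mulVec x)}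
      ≤ c * Finset.univ.sup' ⟨⟨0, hn⟩, Finset.mem_univ _⟩ (fun i => K i i / d i) :=
  largest_eig_two_sided_bound_general n hn K hK c hrow d hd
end

section
/- Let k < p be natural numbers, let α : ℕ → ℝ satisfy α_{k+1} ≠ 0, and let f(ξ) = Σ_{m=k+1}^{p} α_m ξ^m. Then, as δ → 0⁺, the ratio (∫_0^δ (f′(ξ))² dξ) / (∫_0^δ f(ξ) dξ) is Θ(δ^{k-1}) (exponent taken in ℤ, so this is Θ(δ^{-1}) when k = 0). -/
/-!
Factor `f(ξ) = ξ^(k+1) g(ξ)` and `f'(ξ) = ξ^k h(ξ)` with `g(0) = α_{k+1}` and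
`h(0) = (k+1) α_{k+1}`. The substitution `ξ = δ t` gives
`∫_0^δ ξ^j u(ξ) dξ = δ^(j+1) ∫_0^1 t^j u(δ t) dt`, and the last integral tends to
`u(0)/(j+1) ≠ 0`. Hence the numerator is `Θ(δ^(2k+1))`, the denominator
`Θ(δ^(k+2))`, and their ratio `Θ(δ^(k-1))`.
-/

open Topology Asymptotics

open Filter Finset intervalIntegral

section PowerSums

variable {R : Type*} [CommSemiring R]

theorem sum_Icc_mul_pow_sub_eq_pow_mul (c : ℕ → R) {a s : ℕ} (b : ℕ) (hs : s ≤ a) (x : R) :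
    ∑ m ∈ Icc a b, c m * x ^ (m - s) = x ^ (a - s) * ∑ m ∈ Icc a b, c m * x ^ (m - a) := by
  rw [mul_sum]
  refine sum_congr rfl fun m hm => ?_
  rw [← Nat.sub_add_sub_cancel (mem_Icc.1 hm).1 hs, pow_add]
  ring

theorem sum_Icc_mul_zero_pow_sub (c : ℕ → R) {a b : ℕ} (hab : a ≤ b) :
    ∑ m ∈ Icc a b, c m * (0 : R) ^ (m - a) = c a := by
  rw [sum_eq_single_of_mem a (left_mem_Icc.2 hab), Nat.sub_self, pow_zero, mul_one]
  intro m hm hma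
  rw [zero_pow (by grind), mul_zero]

end PowerSums

theorem deriv_sum_mul_pow {𝕜 ι : Type*} [NontriviallyNormedField 𝕜] (s : Finset ι) (c : ι → 𝕜)
    (e : ι → ℕ) (x : 𝕜) :
    deriv (fun t => ∑ i ∈ s, c i * t ^ e i) x = ∑ i ∈ s, c i * e i * x ^ (e i - 1) := by
  refine (HasDerivAt.fun_sum fun i _ => ((hasDerivAt_pow (e i) x).const_mul (c i))).deriv.trans ?_
  simp only [mul_assoc]

theorem integral_pow_mul_eq_pow_mul (u : ℝ → ℝ) (j : ℕ) (δ : ℝ) :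
    ∫ ξ in 0..δ, ξ ^ j * u ξ = δ ^ (j + 1) * ∫ t in 0..1, t ^ j * u (δ * t) := by
  have := smul_integral_comp_mul_left (fun ξ => ξ ^ j * u ξ) δ (a := 0) (b := 1)
  rw [mul_zero, mul_one] at this
  simp only [mul_pow, mul_assoc, integral_const_mul, smul_eq_mul] at this
  rw [← this]
  ring

theorem integral_pow_mul_isEquivalent {u : ℝ → ℝ} (hu : Continuous u) (hu0 : u 0 ≠ 0) (j : ℕ) :
    (fun δ => ∫ ξ in 0..δ, ξ ^ j * u ξ) ~[𝓝 0] fun δ => u 0 / (j + 1) * δ ^ (j + 1) := by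
  have hlim : Tendsto (fun δ => ∫ t in 0..1, t ^ j * u (δ * t)) (𝓝 0) (𝓝 (u 0 / (j + 1))) := by
    have hcont : Continuous fun δ => ∫ t in 0..1, t ^ j * u (δ * t) := by fun_prop
    simpa [integral_mul_const, integral_pow, div_eq_inv_mul] using hcont.tendsto 0
  have hne : u 0 / (j + 1) ≠ 0 := div_ne_zero hu0 (by positivity)
  refine (((isEquivalent_const_iff_tendsto hne).2 hlim).mul IsEquivalent.refl).congr_left ?_
  exact .of_forall fun δ => ((integral_pow_mul_eq_pow_mul u j δ).trans (mul_comm _ _)).symm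

theorem integral_pow_mul_isTheta {u : ℝ → ℝ} (hu : Continuous u) (hu0 : u 0 ≠ 0) (j : ℕ) :
    (fun δ => ∫ ξ in 0..δ, ξ ^ j * u ξ) =Θ[𝓝 0] fun δ => δ ^ (j + 1) :=
  (integral_pow_mul_isEquivalent hu hu0 j).isTheta.trans <|
    (isTheta_const_mul_left (div_ne_zero hu0 (by positivity))).2 isTheta_rfl

/-- For `f(ξ) = ∑_{m=k+1}^{p} α_m ξ^m` with `α_{k+1} ≠ 0`, the ratio
`(∫_0^δ (f′)²) / (∫_0^δ f)` (stiffness over lumped-mass diagonal entry) is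
`Θ(δ^{k-1})` as `δ → 0⁺`, the exponent taken in `ℤ`. -/
theorem rayleigh_ratio_lumped_asymptotics_1d (k p : ℕ) (hkp : k < p)
    (α : ℕ → ℝ) (hα : α (k + 1) ≠ 0) :
    (fun δ : ℝ =>
        (∫ ξ in (0:ℝ)..δ,
          (deriv (fun t : ℝ => ∑ m ∈ Finset.Icc (k + 1) p, α m * t ^ m) ξ) ^ 2) /
        (∫ ξ in (0:ℝ)..δ, ∑ m ∈ Finset.Icc (k + 1) p, α m * ξ ^ m))
      =Θ[𝓝[>] (0:ℝ)] (fun δ : ℝ => δ ^ ((k : ℤ) - 1)) := by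
  set g : ℝ → ℝ := fun ξ => ∑ m ∈ Icc (k + 1) p, α m * ξ ^ (m - (k + 1))
  set h : ℝ → ℝ := fun ξ => ∑ m ∈ Icc (k + 1) p, α m * m * ξ ^ (m - (k + 1))
  have hf : ∀ ξ : ℝ, ∑ m ∈ Icc (k + 1) p, α m * ξ ^ m = ξ ^ (k + 1) * g ξ := fun ξ => by
    simpa using sum_Icc_mul_pow_sub_eq_pow_mul α p (Nat.zero_le (k + 1)) ξ
  have hf' : ∀ ξ : ℝ, deriv (fun t => ∑ m ∈ Icc (k + 1) p, α m * t ^ m) ξ ^ 2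
      = ξ ^ (2 * k) * h ξ ^ 2 := fun ξ => by
    rw [deriv_sum_mul_pow, sum_Icc_mul_pow_sub_eq_pow_mul (fun m => α m * m) p (by omega),
      Nat.add_sub_cancel]
    ring
  have hg0 : g 0 = α (k + 1) := sum_Icc_mul_zero_pow_sub α hkp
  have hh0 : h 0 = α (k + 1) * (k + 1 : ℕ) := sum_Icc_mul_zero_pow_sub (fun m => α m * m) hkp
  have hnum := integral_pow_mul_isTheta (u := fun ξ => h ξ ^ 2) (by fun_prop)
    (pow_ne_zero 2 (hh0 ▸ mul_ne_zero hα (by positivity))) (2 * k)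
  have hden := integral_pow_mul_isTheta (u := g) (by fun_prop) (hg0 ▸ hα) (k + 1)
  simp only [hf']
  simp only [hf]
  refine ((hnum.div hden).mono nhdsWithin_le_nhds).trans_eventuallyEq ?_
  filter_upwards [self_mem_nhdsWithin] with δ hδ
  rw [← zpow_natCast, ← zpow_natCast, ← zpow_sub₀ (ne_of_gt hδ)]
  congr 1
  push_cast
  ring
end

section
/- Let k < p be natural numbers, let α : ℕ → ℝ satisfy α_{k+1} ≠ 0, and let f(ξ) = Σ_{m=k+1}^{p} α_m ξ^m. Then, as δ → 0⁺, the ratio (∫_0^δ (f′(ξ))² dξ) / (∫_0^δ (f(ξ))² dξ) is Θ(δ^{-2}); in particular this lower bound on the largest generalized eigenvalue with the consistent mass is independent of the spline degree p and smoothness k. -/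
/-!
The substitution `ξ = δ t` gives `∫₀^δ ξⁿ w(ξ) dξ = δⁿ⁺¹ ∫₀¹ tⁿ w(δ t) dt`, and the last integral
tends to `w 0 / (n + 1)`, so it is `Θ(δⁿ⁺¹)` whenever `w` is continuous with `w 0 ≠ 0`.
Factoring out the lowest power, `f ξ = ξᵏ⁺¹ r₀ ξ` and `f' ξ = ξᵏ r₁ ξ` with `r₀ 0 = α_{k+1}` and
`r₁ 0 = (k + 1) α_{k+1}`, so the stiffness and mass entries are `Θ(δ²ᵏ⁺¹)` and `Θ(δ²ᵏ⁺³)`.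
-/

open Topology Asymptotics Filter

theorem integral_pow_mul_eq_pow_mul_integral (n : ℕ) (w : ℝ → ℝ) (δ : ℝ) :
    ∫ ξ in (0:ℝ)..δ, ξ ^ n * w ξ = δ ^ (n + 1) * ∫ t in (0:ℝ)..1, t ^ n * w (δ * t) := by
  have h := intervalIntegral.smul_integral_comp_mul_left (fun ξ => ξ ^ n * w ξ) δ (a := 0) (b := 1)
  rw [mul_zero, mul_one] at h
  rw [← h, smul_eq_mul, ← intervalIntegral.integral_const_mul, ← intervalIntegral.integral_const_mul]
  congr 1 with t
  ring

theorem isTheta_integral_pow_mul (n : ℕ) {w : ℝ → ℝ} (hw : Continuous w) (hw0 : w 0 ≠ 0) :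
    (fun δ => ∫ ξ in (0:ℝ)..δ, ξ ^ n * w ξ) =Θ[𝓝 0] fun δ => δ ^ (n + 1) := by
  set Q : ℝ → ℝ := fun δ => ∫ t in (0:ℝ)..1, t ^ n * w (δ * t)
  have hQ : Continuous Q :=
    intervalIntegral.continuous_parametric_intervalIntegral_of_continuous' (by fun_prop) 0 1
  have hQ0 : Q 0 = w 0 / (n + 1) := by
    simp only [Q, zero_mul, intervalIntegral.integral_mul_const, integral_pow, one_pow, ne_eq,
      Nat.add_eq_zero_iff, one_ne_zero, and_false, not_false_eq_true, zero_pow, sub_zero, one_div]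
    ring
  have hQ0_ne : Q 0 ≠ 0 := by rw [hQ0]; positivity
  have hQ_one : Q =Θ[𝓝 0] fun _ => (1:ℝ) :=
    (isTheta_of_div_tendsto_nhds_ne_zero (by simpa using hQ.tendsto 0) hQ0_ne).symm
  rw [funext (integral_pow_mul_eq_pow_mul_integral n w)]
  simpa using (isTheta_refl (fun δ : ℝ => δ ^ (n + 1)) _).mul hQ_one

theorem isTheta_integral_sq_pow_mul (n : ℕ) {r : ℝ → ℝ} (hr : Continuous r) (hr0 : r 0 ≠ 0) :
    (fun δ => ∫ ξ in (0:ℝ)..δ, (ξ ^ n * r ξ) ^ 2) =Θ[𝓝 0] fun δ => δ ^ (2 * n + 1) := by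
  simp_rw [mul_pow, ← pow_mul, mul_comm n 2]
  exact isTheta_integral_pow_mul (2 * n) (hr.pow 2) (pow_ne_zero 2 hr0)

theorem hasDerivAt_sum_mul_pow (s : Finset ℕ) (β : ℕ → ℝ) (ξ : ℝ) :
    HasDerivAt (fun t => ∑ m ∈ s, β m * t ^ m) (∑ m ∈ s, m * β m * ξ ^ (m - 1)) ξ := by
  refine (HasDerivAt.fun_sum fun m _ => (hasDerivAt_pow m ξ).const_mul (β m)).congr_deriv ?_
  exact Finset.sum_congr rfl fun m _ => by ring

theorem sum_mul_pow_sub_eq_pow_mul_sum {s : Finset ℕ} {n d : ℕ} (hn : ∀ m ∈ s, n ≤ m) (hd : d ≤ n)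
    (β : ℕ → ℝ) (ξ : ℝ) :
    ∑ m ∈ s, β m * ξ ^ (m - d) = ξ ^ (n - d) * ∑ m ∈ s, β m * ξ ^ (m - n) := by
  rw [Finset.mul_sum]
  refine Finset.sum_congr rfl fun m hm => ?_
  rw [mul_left_comm, ← pow_add, add_comm, Nat.sub_add_sub_cancel (hn m hm) hd]

theorem sum_mul_zero_pow_sub {s : Finset ℕ} {n : ℕ} (hns : n ∈ s) (hn : ∀ m ∈ s, n ≤ m)
    (β : ℕ → ℝ) : ∑ m ∈ s, β m * (0:ℝ) ^ (m - n) = β n := by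
  rw [Finset.sum_eq_single_of_mem n hns fun m hm hmn => ?_]
  · simp
  · rw [zero_pow (by have := hn m hm; omega), mul_zero]

/-- For `f(ξ) = ∑_{m=k+1}^{p} α_m ξ^m` with `α_{k+1} ≠ 0`, the ratio
`(∫_0^δ (f′)²) / (∫_0^δ f²)` (stiffness over consistent-mass diagonal entry) is
`Θ(δ^{-2})` as `δ → 0⁺`, independently of `p` and `k`. -/
theorem rayleigh_ratio_consistent_asymptotics_1d (k p : ℕ) (hkp : k < p)
    (α : ℕ → ℝ) (hα : α (k + 1) ≠ 0) :
    (fun δ : ℝ =>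
        (∫ ξ in (0:ℝ)..δ,
          (deriv (fun t : ℝ => ∑ m ∈ Finset.Icc (k + 1) p, α m * t ^ m) ξ) ^ 2) /
        (∫ ξ in (0:ℝ)..δ, (∑ m ∈ Finset.Icc (k + 1) p, α m * ξ ^ m) ^ 2))
      =Θ[𝓝[>] (0:ℝ)] (fun δ : ℝ => δ ^ (-2 : ℤ)) := by
  set s := Finset.Icc (k + 1) p
  have hks : k + 1 ∈ s := Finset.mem_Icc.2 ⟨le_rfl, hkp⟩
  have hs : ∀ m ∈ s, k + 1 ≤ m := fun m hm => (Finset.mem_Icc.1 hm).1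
  have hr : ∀ β : ℕ → ℝ, Continuous fun ξ : ℝ => ∑ m ∈ s, β m * ξ ^ (m - (k + 1)) := by
    intro β; fun_prop
  have hf : ∀ ξ : ℝ, ∑ m ∈ s, α m * ξ ^ m = ξ ^ (k + 1) * ∑ m ∈ s, α m * ξ ^ (m - (k + 1)) := by
    simpa using sum_mul_pow_sub_eq_pow_mul_sum hs (Nat.zero_le _) α
  have hf' : ∀ ξ : ℝ, deriv (fun t => ∑ m ∈ s, α m * t ^ m) ξ
      = ξ ^ k * ∑ m ∈ s, m * α m * ξ ^ (m - (k + 1)) := fun ξ => by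
    rw [(hasDerivAt_sum_mul_pow s α ξ).deriv,
      sum_mul_pow_sub_eq_pow_mul_sum hs (Nat.le_add_left 1 k), Nat.add_sub_cancel]
  have hstiff := isTheta_integral_sq_pow_mul k (hr fun m => m * α m) (by
    rw [sum_mul_zero_pow_sub hks hs]; exact mul_ne_zero (by positivity) hα)
  have hmass := isTheta_integral_sq_pow_mul (k + 1) (hr α) (by rwa [sum_mul_zero_pow_sub hks hs])
  -- `hf` would also rewrite the function under `deriv`, so `hf'` must go first.
  simp_rw [hf', hf]
  refine ((hstiff.div hmass).mono nhdsWithin_le_nhds).trans_eventuallyEq ?_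
  filter_upwards [self_mem_nhdsWithin] with δ (hδ : (0:ℝ) < δ)
  rw [show 2 * (k + 1) + 1 = 2 * k + 1 + 2 by ring, pow_add, zpow_neg, zpow_ofNat]
  field_simp
  ring
end

section
/- Let c₁ < c₂ be real numbers, let g be a real polynomial that is not identically zero, let k < p be natural numbers, let α : ℕ → ℝ satisfy α_{k+1} ≠ 0, and let f(ξ) = Σ_{m=k+1}^{p} α_m ξ^m. Then, as δ → 0⁺, the squared H¹ seminorm of the tensor-product function φ(ξ₁,ξ₂) = g(ξ₁)f(ξ₂) on the rectangle [c₁,c₂] × [0,δ], namely ∫_{c₁}^{c₂}∫_0^δ [ (g′(ξ₁))²(f(ξ₂))² + (g(ξ₁))²(f′(ξ₂))² ] dξ₂ dξ₁, is Θ(δ^{2k+1}). -/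
/-!
Let `f = ∑ α_m X^m`. The integrand separates, so the seminorm equals
`A · ∫₀^δ f² + B · ∫₀^δ (f')²` with `A = ∫ (g')²` and `B = ∫ g² > 0`. Near `0` the lowest
coefficients `α_{k+1}` of `f` and `(k+1) α_{k+1}` of `f'` give `f = Θ(ξ^{k+1})` and
`f' = Θ(ξ^k)`; integrating, the first term is `O(δ^{2k+3}) = o(δ^{2k+1})` and the second is
`Θ(δ^{2k+1})`.
-/

open Topology Asymptotics Polynomial Filter MeasureTheory Set

theorem Polynomial.eval_isTheta_pow {𝕜 : Type*} [NormedField 𝕜] {Q : 𝕜[X]} {n : ℕ}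
    (hlow : ∀ j < n, Q.coeff j = 0) (hn : Q.coeff n ≠ 0) :
    (fun t => Q.eval t) =Θ[𝓝 0] (· ^ n) := by
  obtain ⟨R, rfl⟩ := X_pow_dvd_iff.2 hlow
  have hR : R.eval 0 ≠ 0 := by
    rw [← coeff_zero_eq_eval_zero]
    simpa [coeff_X_pow_mul'] using hn
  have hR_one : (fun t => R.eval t) =Θ[𝓝 0] fun _ => (1 : 𝕜) :=
    ((isEquivalent_const_iff_tendsto hR).2 (R.continuous.tendsto 0)).isTheta.trans
      (isTheta_const_const hR one_ne_zero)
  simpa using (isTheta_refl (· ^ n) (𝓝 0)).mul hR_one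

theorem Polynomial.eval_derivative_isTheta_pow {𝕜 : Type*} [NormedField 𝕜] [CharZero 𝕜]
    {Q : 𝕜[X]} {n : ℕ} (hlow : ∀ j < n + 1, Q.coeff j = 0) (hn : Q.coeff (n + 1) ≠ 0) :
    (fun t => Q.derivative.eval t) =Θ[𝓝 0] (· ^ n) :=
  eval_isTheta_pow (fun j hj => by rw [coeff_derivative, hlow (j + 1) (by omega), zero_mul])
    (by rw [coeff_derivative]; exact mul_ne_zero hn (Nat.cast_add_one_ne_zero n))

theorem integral_isBigO_pow {E : Type*} [NormedAddCommGroup E] [NormedSpace ℝ E]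
    {φ : ℝ → E} {n : ℕ} (h : φ =O[𝓝 0] (· ^ n)) :
    (fun δ => ∫ t in (0 : ℝ)..δ, φ t) =O[𝓝 0] (· ^ (n + 1)) := by
  obtain ⟨c, hc, hc_bound⟩ := h.exists_nonneg
  obtain ⟨ε, hε, hball⟩ := Metric.eventually_nhds_iff_ball.1 hc_bound.bound
  refine IsBigO.of_bound c ?_
  filter_upwards [Metric.ball_mem_nhds 0 hε] with δ hδ
  have hbound : ∀ t ∈ uIoc 0 δ, ‖φ t‖ ≤ c * |δ| ^ n := by
    intro t ht
    have htδ : |t| ≤ |δ| := by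
      simpa using abs_sub_left_of_mem_uIcc (uIoc_subset_uIcc ht)
    have ht_ball : t ∈ Metric.ball 0 ε := by
      simp only [Metric.mem_ball, dist_zero_right, Real.norm_eq_abs] at hδ ⊢
      exact htδ.trans_lt hδ
    calc ‖φ t‖ ≤ c * ‖t ^ n‖ := hball t ht_ball
      _ ≤ c * |δ| ^ n := by
        rw [norm_pow, Real.norm_eq_abs]
        gcongr
  calc ‖∫ t in (0 : ℝ)..δ, φ t‖ ≤ c * |δ| ^ n * |δ - 0| :=
        intervalIntegral.norm_integral_le_of_norm_le_const hbound
    _ = c * ‖δ ^ (n + 1)‖ := by rw [sub_zero, norm_pow, Real.norm_eq_abs, pow_succ, mul_assoc]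

theorem pow_isBigO_integral {φ : ℝ → ℝ} {n : ℕ} (hφ : Continuous φ) (hφ₀ : 0 ≤ φ)
    (h : (· ^ n) =O[𝓝 0] φ) :
    (· ^ (n + 1)) =O[𝓝[>] 0] (fun δ => ∫ t in (0 : ℝ)..δ, φ t) := by
  obtain ⟨c, hc⟩ := h.bound
  obtain ⟨ε, hε, hball⟩ := Metric.eventually_nhds_iff_ball.1 hc
  refine IsBigO.of_bound ((n + 1) * c) ?_
  filter_upwards [Ioo_mem_nhdsGT hε] with δ hδ
  have hle : ∀ t ∈ Icc 0 δ, t ^ n ≤ c * φ t := by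
    intro t ht
    have ht_ball : t ∈ Metric.ball 0 ε := by
      rw [Metric.mem_ball, dist_zero_right, Real.norm_eq_abs, abs_of_nonneg ht.1]
      exact ht.2.trans_lt hδ.2
    simpa [abs_of_nonneg ht.1, abs_of_nonneg (hφ₀ t)] using hball t ht_ball
  have hmono := intervalIntegral.integral_mono_on hδ.1.le
    ((continuous_pow n).intervalIntegrable (μ := volume) 0 δ)
    ((hφ.intervalIntegrable 0 δ).const_mul c) hle
  rw [integral_pow, intervalIntegral.integral_const_mul, zero_pow n.succ_ne_zero, sub_zero,
    div_le_iff₀ (by positivity)] at hmono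
  rw [Real.norm_of_nonneg (pow_nonneg hδ.1.le _),
    Real.norm_of_nonneg (intervalIntegral.integral_nonneg hδ.1.le fun t _ => hφ₀ t)]
  calc δ ^ (n + 1) ≤ (c * ∫ t in (0 : ℝ)..δ, φ t) * (n + 1) := hmono
    _ = (n + 1) * c * ∫ t in (0 : ℝ)..δ, φ t := by ring

theorem integral_isTheta_pow {φ : ℝ → ℝ} {n : ℕ} (hφ : Continuous φ) (hφ₀ : 0 ≤ φ)
    (h : φ =Θ[𝓝 0] (· ^ n)) :
    (fun δ => ∫ t in (0 : ℝ)..δ, φ t) =Θ[𝓝[>] 0] (· ^ (n + 1)) :=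
  ⟨(integral_isBigO_pow h.isBigO).mono nhdsWithin_le_nhds,
    pow_isBigO_integral hφ hφ₀ h.isBigO_symm⟩

theorem integral_integral_mul_add_mul {a b u w : ℝ → ℝ} {x₁ x₂ y₁ y₂ : ℝ}
    (ha : IntervalIntegrable a volume x₁ x₂) (hb : IntervalIntegrable b volume x₁ x₂)
    (hu : IntervalIntegrable u volume y₁ y₂) (hw : IntervalIntegrable w volume y₁ y₂) :
    ∫ x in x₁..x₂, ∫ y in y₁..y₂, a x * u y + b x * w y =
      (∫ x in x₁..x₂, a x) * (∫ y in y₁..y₂, u y) +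
        (∫ x in x₁..x₂, b x) * ∫ y in y₁..y₂, w y := by
  have hinner : ∀ x, ∫ y in y₁..y₂, a x * u y + b x * w y =
      a x * (∫ y in y₁..y₂, u y) + b x * ∫ y in y₁..y₂, w y := fun x => by
    rw [intervalIntegral.integral_add (hu.const_mul _) (hw.const_mul _),
      intervalIntegral.integral_const_mul, intervalIntegral.integral_const_mul]
  simp_rw [hinner]
  rw [intervalIntegral.integral_add (ha.mul_const _) (hb.mul_const _),
    intervalIntegral.integral_mul_const, intervalIntegral.integral_mul_const]

theorem Polynomial.integral_eval_sq_pos {g : ℝ[X]} (hg : g ≠ 0) {a b : ℝ} (hab : a < b) :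
    0 < ∫ x in a..b, g.eval x ^ 2 := by
  obtain ⟨x, hx, hroot⟩ := ((Icc_infinite hab).sdiff (finite_setOfPred_isRoot hg)).nonempty
  have hx_ne : g.eval x ≠ 0 := hroot
  exact intervalIntegral.integral_pos hab (g.continuous.pow 2).continuousOn
    (fun _ _ => sq_nonneg _) ⟨x, hx, by positivity⟩

/-- Configuration (a): for `φ(ξ₁,ξ₂) = g(ξ₁) f(ξ₂)` with `g` a nonzero polynomial and
`f(ξ) = ∑_{m=k+1}^{p} α_m ξ^m`, `α_{k+1} ≠ 0`, the squared `H¹` seminorm of `φ` on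
`[c₁,c₂] × [0,δ]` is `Θ(δ^{2k+1})` as `δ → 0⁺`. -/
theorem h1_seminorm_asymptotics_config_a (c₁ c₂ : ℝ) (hc : c₁ < c₂)
    (g : Polynomial ℝ) (hg : g ≠ 0)
    (k p : ℕ) (hkp : k < p) (α : ℕ → ℝ) (hα : α (k + 1) ≠ 0) :
    (fun δ : ℝ => ∫ ξ₁ in c₁..c₂, ∫ ξ₂ in (0:ℝ)..δ,
        ((Polynomial.derivative g).eval ξ₁) ^ 2 *
          (∑ m ∈ Finset.Icc (k + 1) p, α m * ξ₂ ^ m) ^ 2 +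
        (g.eval ξ₁) ^ 2 *
          (deriv (fun t : ℝ => ∑ m ∈ Finset.Icc (k + 1) p, α m * t ^ m) ξ₂) ^ 2)
      =Θ[𝓝[>] (0:ℝ)] (fun δ : ℝ => δ ^ (2 * k + 1)) := by
  set f : ℝ[X] := ∑ m ∈ Finset.Icc (k + 1) p, C (α m) * X ^ m
  have hf_eval : ∀ t, ∑ m ∈ Finset.Icc (k + 1) p, α m * t ^ m = f.eval t := by
    simp [f, eval_finsetSum]
  have hf_low : ∀ j < k + 1, f.coeff j = 0 := fun j hj => by simp [f, show ¬k < j by omega]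
  have hf_lead : f.coeff (k + 1) ≠ 0 := by simp [f, hkp, hα]
  have hu : (fun t => f.eval t ^ 2) =O[𝓝 0] (· ^ (2 * (k + 1))) := by
    simpa only [← pow_mul'] using (eval_isTheta_pow hf_low hf_lead).isBigO.pow 2
  have hw : (fun t => f.derivative.eval t ^ 2) =Θ[𝓝 0] (· ^ (2 * k)) := by
    simpa only [← pow_mul'] using (eval_derivative_isTheta_pow hf_low hf_lead).pow 2
  simp_rw [hf_eval, Polynomial.deriv]
  refine EventuallyEq.trans_isTheta
    (.of_forall fun δ => integral_integral_mul_add_mul ?_ ?_ ?_ ?_) (IsLittleO.add_isTheta ?_ ?_)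
  any_goals exact Continuous.intervalIntegrable (by fun_prop) _ _
  · refine (((integral_isBigO_pow hu).trans_isLittleO ?_).const_mul_left _).mono nhdsWithin_le_nhds
    exact isLittleO_pow_pow (by omega)
  · exact (integral_isTheta_pow (f.derivative.continuous.pow 2) (fun _ => sq_nonneg _)
      hw).const_mul_left (integral_eval_sq_pos hg hc).ne'
end

section
/- Let c₁ < c₂ be real numbers, let g be a real polynomial with ∫_{c₁}^{c₂} g(ξ₁) dξ₁ ≠ 0, let k < p be natural numbers, let α : ℕ → ℝ satisfy α_{k+1} ≠ 0, and let f(ξ) = Σ_{m=k+1}^{p} α_m ξ^m. Then, as δ → 0⁺, the integral ∫_{c₁}^{c₂}∫_0^δ g(ξ₁) f(ξ₂) dξ₂ dξ₁ is Θ(δ^{k+2}). -/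
open Topology Asymptotics Polynomial

/-- Configuration (a): for `φ(ξ₁,ξ₂) = g(ξ₁) f(ξ₂)` with `∫_{c₁}^{c₂} g ≠ 0` and
`f(ξ) = ∑_{m=k+1}^{p} α_m ξ^m`, `α_{k+1} ≠ 0`, the L¹-type integral
`∫_{c₁}^{c₂} ∫_0^δ g(ξ₁) f(ξ₂)` is `Θ(δ^{k+2})` as `δ → 0⁺`. -/
theorem lumped_mass_entry_asymptotics_config_a (c₁ c₂ : ℝ) (hc : c₁ < c₂)
    (g : Polynomial ℝ) (hg : (∫ ξ₁ in c₁..c₂, g.eval ξ₁) ≠ 0)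
    (k p : ℕ) (hkp : k < p) (α : ℕ → ℝ) (hα : α (k + 1) ≠ 0) :
    (fun δ : ℝ => ∫ ξ₁ in c₁..c₂, ∫ ξ₂ in (0:ℝ)..δ,
        g.eval ξ₁ * ∑ m ∈ Finset.Icc (k + 1) p, α m * ξ₂ ^ m)
      =Θ[𝓝[>] (0:ℝ)] (fun δ : ℝ => δ ^ (k + 2)) := by
  set C : ℝ := ∫ ξ₁ in c₁..c₂, g.eval ξ₁ with hC
  set G : ℝ → ℝ := fun δ =>
    C * ∑ m ∈ Finset.Icc (k + 1) p, α m * δ ^ (m - (k + 1)) / (m + 1) with hG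
  -- pointwise identity
  have key : ∀ δ : ℝ,
      (∫ ξ₁ in c₁..c₂, ∫ ξ₂ in (0:ℝ)..δ,
        g.eval ξ₁ * ∑ m ∈ Finset.Icc (k + 1) p, α m * ξ₂ ^ m)
      = G δ * δ ^ (k + 2) := by
    intro δ
    have hinner : ∀ ξ₁ : ℝ, (∫ ξ₂ in (0:ℝ)..δ,
        g.eval ξ₁ * ∑ m ∈ Finset.Icc (k + 1) p, α m * ξ₂ ^ m)
        = g.eval ξ₁ * ∑ m ∈ Finset.Icc (k + 1) p, α m * (δ ^ (m + 1) / (m + 1)) := by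
      intro ξ₁
      rw [intervalIntegral.integral_const_mul]
      congr 1
      rw [intervalIntegral.integral_finset_sum]
      · refine Finset.sum_congr rfl fun m _ => ?_
        rw [intervalIntegral.integral_const_mul, integral_pow]
        simp
      · intro m _
        exact (IntervalIntegrable.const_mul (intervalIntegral.intervalIntegrable_pow m) _)
    have : (∫ ξ₁ in c₁..c₂, ∫ ξ₂ in (0:ℝ)..δ,
        g.eval ξ₁ * ∑ m ∈ Finset.Icc (k + 1) p, α m * ξ₂ ^ m)
        = C * ∑ m ∈ Finset.Icc (k + 1) p, α m * (δ ^ (m + 1) / (m + 1)) := by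
      simp only [hinner]
      rw [intervalIntegral.integral_mul_const]
    rw [this, hG]
    rw [mul_assoc, Finset.sum_mul]
    congr 1
    refine Finset.sum_congr rfl fun m hm => ?_
    have hm' : k + 1 ≤ m := (Finset.mem_Icc.mp hm).1
    have hpow : δ ^ (m + 1) = δ ^ (m - (k + 1)) * δ ^ (k + 2) := by
      rw [← pow_add]
      congr 1
      omega
    rw [hpow]
    ring
  -- G tends to a nonzero limit
  have hG0 : G 0 = C * (α (k + 1) / (k + 2)) := by
    show C * ∑ m ∈ Finset.Icc (k + 1) p, α m * (0:ℝ) ^ (m - (k + 1)) / (m + 1)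
      = C * (α (k + 1) / (k + 2))
    congr 1
    rw [Finset.sum_eq_single (k + 1)]
    · simp
      ring
    · intro m hm hne
      have hm' : k + 1 ≤ m := (Finset.mem_Icc.mp hm).1
      have : 0 < m - (k + 1) := by omega
      rw [zero_pow (by omega)]
      simp
    · intro h
      exact absurd (Finset.mem_Icc.mpr ⟨le_refl _, by omega⟩) h
  have hL : G 0 ≠ 0 := by
    rw [hG0]
    apply mul_ne_zero hg
    apply div_ne_zero hα
    positivity
  have hcont : Continuous G := by
    apply continuous_const.mul
    apply continuous_finset_sum
    intro m _
    exact ((continuous_const.mul (continuous_pow _)).div_const _)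
  have htend : Filter.Tendsto G (𝓝[>] (0:ℝ)) (𝓝 (G 0)) :=
    (hcont.tendsto 0).mono_left nhdsWithin_le_nhds
  -- G =Θ 1
  have hΘ : G =Θ[𝓝[>] (0:ℝ)] (fun _ : ℝ => (1:ℝ)) := by
    constructor
    · exact htend.isBigO_one ℝ
    · rw [Asymptotics.isBigO_iff]
      refine ⟨2 / ‖G 0‖, ?_⟩
      have hev : ∀ᶠ δ in 𝓝[>] (0:ℝ), ‖G 0‖ / 2 ≤ ‖G δ‖ := by
        have : ∀ᶠ y in 𝓝 (G 0), ‖G 0‖ / 2 ≤ ‖y‖ := by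
          have hpos : 0 < ‖G 0‖ := norm_pos_iff.mpr hL
          have : {y : ℝ | ‖G 0‖ / 2 < ‖y‖} ∈ 𝓝 (G 0) := by
            apply IsOpen.mem_nhds
            · exact isOpen_lt continuous_const continuous_norm
            · simpa using half_lt_self hpos
          exact Filter.eventually_of_mem this fun y hy => le_of_lt hy
        exact htend.eventually this
      filter_upwards [hev] with δ hδ
      have hpos : 0 < ‖G 0‖ := norm_pos_iff.mpr hL
      have h2 : 0 < ‖G δ‖ := lt_of_lt_of_le (by positivity) hδ
      rw [norm_one, div_mul_eq_mul_div, le_div_iff₀ hpos, one_mul]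
      linarith
  have : (fun δ : ℝ => G δ * δ ^ (k + 2)) =Θ[𝓝[>] (0:ℝ)]
      (fun δ : ℝ => 1 * δ ^ (k + 2)) := hΘ.mul isTheta_rfl
  simp only [one_mul] at this
  calc (fun δ : ℝ => ∫ ξ₁ in c₁..c₂, ∫ ξ₂ in (0:ℝ)..δ,
        g.eval ξ₁ * ∑ m ∈ Finset.Icc (k + 1) p, α m * ξ₂ ^ m)
      = fun δ => G δ * δ ^ (k + 2) := funext key
    _ =Θ[𝓝[>] (0:ℝ)] _ := this
end

section
/- Let c₁ < c₂ be real numbers, let g be a real polynomial with ∫_{c₁}^{c₂} g(ξ₁) dξ₁ ≠ 0 and g not identically zero, let k < p be natural numbers, let α : ℕ → ℝ satisfy α_{k+1} ≠ 0, and let f(ξ) = Σ_{m=k+1}^{p} α_m ξ^m. Then, as δ → 0⁺, the Rayleigh-type ratio [∫_{c₁}^{c₂}∫_0^δ ((g′(ξ₁))²(f(ξ₂))² + (g(ξ₁))²(f′(ξ₂))²) dξ₂ dξ₁] / [∫_{c₁}^{c₂}∫_0^δ g(ξ₁)f(ξ₂) dξ₂ dξ₁] is Θ(δ^{k-1}) (exponent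 taken in ℤ). -/
/-!
Both factors separate: the numerator is `(∫ g'²) ∫₀^δ f² + (∫ g²) ∫₀^δ f'²` and the
denominator is `(∫ g) ∫₀^δ f`. Near `0` we have `f ξ ∼ α_{k+1} ξ^{k+1}` and
`f' ξ ∼ (k+1) α_{k+1} ξ^k`, and integrating from `0` raises the order by one (L'Hôpital),
so `∫₀^δ f ≍ δ^{k+2}`, `∫₀^δ f'² ≍ δ^{2k+1}` while `∫₀^δ f² = o(δ^{2k+1})`. Since
`∫ g ≠ 0` forces `∫ g² ≠ 0`, the ratio is `≍ δ^{2k+1} / δ^{k+2} = δ^{k-1}`.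
-/

open Filter Topology Asymptotics Polynomial

theorem integral_integral_mul (u v : ℝ → ℝ) (a b c d : ℝ) :
    ∫ x in a..b, ∫ y in c..d, u x * v y = (∫ x in a..b, u x) * ∫ y in c..d, v y := by
  simp_rw [intervalIntegral.integral_const_mul, intervalIntegral.integral_mul_const]

theorem integral_integral_mul_add_mul_s12 {u₁ v₁ u₂ v₂ : ℝ → ℝ} {a b c d : ℝ}
    (hu₁ : IntervalIntegrable u₁ MeasureTheory.volume a b)
    (hu₂ : IntervalIntegrable u₂ MeasureTheory.volume a b)
    (hv₁ : IntervalIntegrable v₁ MeasureTheory.volume c d)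
    (hv₂ : IntervalIntegrable v₂ MeasureTheory.volume c d) :
    ∫ x in a..b, ∫ y in c..d, (u₁ x * v₁ y + u₂ x * v₂ y) =
      (∫ x in a..b, u₁ x) * (∫ y in c..d, v₁ y) + (∫ x in a..b, u₂ x) * ∫ y in c..d, v₂ y := by
  simp_rw [intervalIntegral.integral_add (hv₁.const_mul _) (hv₂.const_mul _),
    intervalIntegral.integral_const_mul]
  rw [intervalIntegral.integral_add (hu₁.mul_const _) (hu₂.mul_const _),
    intervalIntegral.integral_mul_const, intervalIntegral.integral_mul_const]

theorem integral_sq_ne_zero {u : ℝ → ℝ} {a b : ℝ} (hu : Continuous u)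
    (h : (∫ x in a..b, u x) ≠ 0) : (∫ x in a..b, u x ^ 2) ≠ 0 := by
  contrapose! h
  rw [intervalIntegral.integral_eq_zero_iff_of_nonneg_ae (.of_forall fun x => sq_nonneg _)
    ((hu.pow 2).intervalIntegrable a b), ← Set.uIoc_eq_union] at h
  refine (intervalIntegral.integral_congr_ae ?_).trans intervalIntegral.integral_zero
  filter_upwards [(MeasureTheory.ae_restrict_iff' measurableSet_uIoc).1 h] with x hx hxab
  exact pow_eq_zero_iff two_ne_zero |>.1 (hx hxab)

theorem Filter.Tendsto.sq_div_pow {l : Filter ℝ} {u : ℝ → ℝ} {n : ℕ} {c : ℝ}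
    (h : Tendsto (fun x => u x / x ^ n) l (𝓝 c)) :
    Tendsto (fun x => u x ^ 2 / x ^ (2 * n)) l (𝓝 (c ^ 2)) :=
  (h.pow 2).congr fun x => by rw [div_pow, ← pow_mul, mul_comm]

theorem tendsto_integral_div_pow_succ {h : ℝ → ℝ} (hh : Continuous h) {n : ℕ} {c : ℝ}
    (hlim : Tendsto (fun x => h x / x ^ n) (𝓝[>] 0) (𝓝 c)) :
    Tendsto (fun δ => (∫ x in (0:ℝ)..δ, h x) / δ ^ (n + 1)) (𝓝[>] 0) (𝓝 (c / (n + 1))) := by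
  have hF (x : ℝ) : HasDerivAt (fun δ => ∫ t in (0:ℝ)..δ, h t) (h x) x :=
    (hh.integral_hasStrictDerivAt 0 x).hasDerivAt
  have hG (x : ℝ) : HasDerivAt (fun δ => δ ^ (n + 1)) ((n + 1 : ℝ) * x ^ n) x := by
    simpa using hasDerivAt_pow (n + 1) x
  refine HasDerivAt.lhopital_zero_nhdsGT (.of_forall hF) (.of_forall hG) ?_ ?_ ?_ ?_
  · filter_upwards [self_mem_nhdsWithin] with x (hx : 0 < x)
    positivity
  · simpa using (hF 0).continuousAt.tendsto.mono_left nhdsWithin_le_nhds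
  · simpa using (hG 0).continuousAt.tendsto.mono_left nhdsWithin_le_nhds
  · refine (hlim.div_const (n + 1)).congr fun x => ?_
    rw [div_div, mul_comm]

theorem isTheta_integral_pow_succ {h : ℝ → ℝ} (hh : Continuous h) {n : ℕ} {c : ℝ}
    (hlim : Tendsto (fun x => h x / x ^ n) (𝓝[>] 0) (𝓝 c)) (hc : c ≠ 0) :
    (fun δ => ∫ x in (0:ℝ)..δ, h x) =Θ[𝓝[>] 0] fun δ => δ ^ (n + 1) :=
  (isTheta_of_div_tendsto_nhds_ne_zero (tendsto_integral_div_pow_succ hh hlim)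
    (div_ne_zero hc (by positivity))).symm

theorem Polynomial.tendsto_eval_div_pow {q : ℝ[X]} {n : ℕ} (hq : ∀ j < n, q.coeff j = 0) :
    Tendsto (fun x => q.eval x / x ^ n) (𝓝[≠] 0) (𝓝 (q.coeff n)) := by
  obtain ⟨r, rfl⟩ := X_pow_dvd_iff.2 hq
  rw [coeff_X_pow_mul', if_pos le_rfl, Nat.sub_self, coeff_zero_eq_eval_zero]
  refine (r.continuous.continuousAt.tendsto.mono_left nhdsWithin_le_nhds).congr' ?_
  filter_upwards [self_mem_nhdsWithin] with x (hx : x ≠ 0)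
  rw [eval_mul, eval_pow, eval_X, mul_div_cancel_left₀ _ (pow_ne_zero n hx)]

theorem Polynomial.tendsto_eval_derivative_div_pow {q : ℝ[X]} {n : ℕ}
    (hq : ∀ j < n + 1, q.coeff j = 0) :
    Tendsto (fun x => (derivative q).eval x / x ^ n) (𝓝[≠] 0) (𝓝 (q.coeff (n + 1) * (n + 1))) := by
  have hq' : ∀ j < n, (derivative q).coeff j = 0 := fun j hj => by
    rw [coeff_derivative, hq _ (by omega), zero_mul]
  simpa [coeff_derivative] using tendsto_eval_div_pow hq'

theorem Polynomial.coeff_sum_monomial {R : Type*} [Semiring R] (s : Finset ℕ) (α : ℕ → R)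
    (j : ℕ) : (∑ m ∈ s, monomial m (α m)).coeff j = if j ∈ s then α j else 0 := by
  simp [coeff_monomial]

theorem pow_div_pow_eventuallyEq_zpow {m n : ℕ} {e : ℤ} (h : (m : ℤ) - n = e) :
    (fun x : ℝ => x ^ m / x ^ n) =ᶠ[𝓝[≠] 0] fun x => x ^ e := by
  filter_upwards [self_mem_nhdsWithin] with x (hx : x ≠ 0)
  rw [← zpow_natCast, ← zpow_natCast, ← zpow_sub₀ hx, h]

theorem rayleigh_ratio_asymptotics_config_a_general (c₁ c₂ : ℝ)
    (g : Polynomial ℝ) (hg₁ : (∫ ξ₁ in c₁..c₂, g.eval ξ₁) ≠ 0)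
    (k p : ℕ) (hkp : k < p) (α : ℕ → ℝ) (hα : α (k + 1) ≠ 0) :
    (fun δ : ℝ =>
        (∫ ξ₁ in c₁..c₂, ∫ ξ₂ in (0:ℝ)..δ,
          ((Polynomial.derivative g).eval ξ₁) ^ 2 *
            (∑ m ∈ Finset.Icc (k + 1) p, α m * ξ₂ ^ m) ^ 2 +
          (g.eval ξ₁) ^ 2 *
            (deriv (fun t : ℝ => ∑ m ∈ Finset.Icc (k + 1) p, α m * t ^ m) ξ₂) ^ 2) /
        (∫ ξ₁ in c₁..c₂, ∫ ξ₂ in (0:ℝ)..δ,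
          g.eval ξ₁ * ∑ m ∈ Finset.Icc (k + 1) p, α m * ξ₂ ^ m))
      =Θ[𝓝[>] (0:ℝ)] (fun δ : ℝ => δ ^ ((k : ℤ) - 1)) := by
  set f : ℝ[X] := ∑ m ∈ Finset.Icc (k + 1) p, monomial m (α m)
  have hf (t : ℝ) : ∑ m ∈ Finset.Icc (k + 1) p, α m * t ^ m = f.eval t := by
    simp [f, eval_finsetSum]
  have hf_low : ∀ j < k + 1, f.coeff j = 0 := fun j hj => by
    rw [coeff_sum_monomial, if_neg (by simp; omega)]
  have hf_lead : f.coeff (k + 1) = α (k + 1) := by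
    rw [coeff_sum_monomial, if_pos (by simp; omega)]
  have hf_lim := (tendsto_eval_div_pow hf_low).mono_left (nhdsGT_le_nhdsNE 0)
  have hf'_lim := (tendsto_eval_derivative_div_pow hf_low).mono_left (nhdsGT_le_nhdsNE 0)
  rw [hf_lead] at hf_lim hf'_lim
  have hf'_lead : α (k + 1) * (k + 1) ≠ 0 := mul_ne_zero hα (by positivity)
  simp (disch := exact Continuous.intervalIntegrable (by fun_prop) _ _) only
    [hf, Polynomial.deriv, integral_integral_mul, integral_integral_mul_add_mul_s12]
  set A := ∫ x in c₁..c₂, (derivative g).eval x ^ 2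
  have hsmall : (fun δ => A * ∫ y in (0:ℝ)..δ, f.eval y ^ 2) =o[𝓝[>] 0]
      fun δ => δ ^ (2 * k + 1) :=
    ((isTheta_integral_pow_succ (by fun_prop) hf_lim.sq_div_pow
      (pow_ne_zero 2 hα)).isBigO.const_mul_left A).trans_isLittleO
      ((isLittleO_pow_pow (by omega)).mono nhdsWithin_le_nhds)
  have hlead := (isTheta_integral_pow_succ (by fun_prop) hf'_lim.sq_div_pow
    (pow_ne_zero 2 hf'_lead)).const_mul_left (integral_sq_ne_zero g.continuous hg₁)
  have hden := (isTheta_integral_pow_succ f.continuous hf_lim hα).const_mul_left hg₁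
  exact ((hsmall.add_isTheta hlead).div hden).trans
    ((pow_div_pow_eventuallyEq_zpow (by omega)).filter_mono (nhdsGT_le_nhdsNE 0)).isTheta

/-- Configuration (a): for `φ(ξ₁,ξ₂) = g(ξ₁) f(ξ₂)` with `g` a nonzero polynomial
satisfying `∫_{c₁}^{c₂} g ≠ 0`, and `f(ξ) = ∑_{m=k+1}^{p} α_m ξ^m`, `α_{k+1} ≠ 0`,
the Rayleigh-type ratio (squared H¹ seminorm over L¹ norm of `φ` on
`[c₁,c₂] × [0,δ]`) is `Θ(δ^{k-1})` as `δ → 0⁺`, the exponent taken in `ℤ`. -/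
theorem rayleigh_ratio_asymptotics_config_a (c₁ c₂ : ℝ) (hc : c₁ < c₂)
    (g : Polynomial ℝ) (hg₁ : (∫ ξ₁ in c₁..c₂, g.eval ξ₁) ≠ 0) (hg₂ : g ≠ 0)
    (k p : ℕ) (hkp : k < p) (α : ℕ → ℝ) (hα : α (k + 1) ≠ 0) :
    (fun δ : ℝ =>
        (∫ ξ₁ in c₁..c₂, ∫ ξ₂ in (0:ℝ)..δ,
          ((Polynomial.derivative g).eval ξ₁) ^ 2 *
            (∑ m ∈ Finset.Icc (k + 1) p, α m * ξ₂ ^ m) ^ 2 +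
          (g.eval ξ₁) ^ 2 *
            (deriv (fun t : ℝ => ∑ m ∈ Finset.Icc (k + 1) p, α m * t ^ m) ξ₂) ^ 2) /
        (∫ ξ₁ in c₁..c₂, ∫ ξ₂ in (0:ℝ)..δ,
          g.eval ξ₁ * ∑ m ∈ Finset.Icc (k + 1) p, α m * ξ₂ ^ m))
      =Θ[𝓝[>] (0:ℝ)] (fun δ : ℝ => δ ^ ((k : ℤ) - 1)) :=
  rayleigh_ratio_asymptotics_config_a_general c₁ c₂ g hg₁ k p hkp α hα
end

section
/- Let z ∈ ℝ, let g be a real polynomial with g(z) ≠ 0, let k < p be natural numbers, let α : ℕ → ℝ satisfy α_{k+1} ≠ 0, and let f(ξ) = Σ_{m=k+1}^{p} α_m ξ^m. Then, as δ → 0⁺, the integral ∫_z^{z+δ}∫_0^δ g(ξ₁) f(ξ₂) dξ₂ dξ₁ is Θ(δ^{k+3}). -/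
/-!
Separating variables, the double integral is `(∫_z^{z+δ} g) · (∫_0^δ f)`. The first factor has
derivative `g(z) ≠ 0` at `δ = 0`, so it is `Θ(δ)`; the second is `δ` times a polynomial in `δ`
whose lowest coefficient is `α_{k+1}/(k+2) ≠ 0` in degree `k+1`, so it is `Θ(δ^{k+2})`.
-/

open Topology Asymptotics Filter Finset intervalIntegral

theorem HasDerivAt.isTheta_sub {𝕜 F : Type*} [NontriviallyNormedField 𝕜]
    [NormedAddCommGroup F] [NormedSpace 𝕜 F] {f : 𝕜 → F} {f' : F} {x : 𝕜} (hf : HasDerivAt f f' x) (hf' : f' ≠ 0) :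
    (f · - f x) =Θ[𝓝 x] (· - x) :=
  have hθ := HasDerivAtFilter.isTheta_sub hf hf'
  have hx : Tendsto (fun y ↦ (y, x)) (𝓝 x) (𝓝 x ×ˢ pure x) :=
    tendsto_id.prodMk tendsto_const_pure
  ⟨hθ.1.comp_tendsto hx, hθ.2.comp_tendsto hx⟩

theorem Filter.Tendsto.isTheta_const {α E F : Type*} [NormedAddCommGroup E] [NormedAddCommGroup F]
    {l : Filter α} {f : α → E} {c : E} (h : Tendsto f l (𝓝 c)) (hc : c ≠ 0) {c' : F}
    (hc' : c' ≠ 0) : f =Θ[l] fun _ ↦ c' :=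
  ((isEquivalent_const_iff_tendsto hc).mpr h).isTheta.trans (isTheta_const_const hc hc')

theorem isTheta_sum_Icc_mul_pow {𝕜 : Type*} [NormedField 𝕜] {n p : ℕ} (hnp : n ≤ p)
    {c : ℕ → 𝕜} (hc : c n ≠ 0) :
    (fun x : 𝕜 ↦ ∑ m ∈ Icc n p, c m * x ^ m) =Θ[𝓝 0] fun x ↦ x ^ n := by
  set q : 𝕜 → 𝕜 := fun x ↦ ∑ m ∈ Icc n p, c m * x ^ (m - n)
  have hfactor : (fun x : 𝕜 ↦ ∑ m ∈ Icc n p, c m * x ^ m) = fun x ↦ x ^ n * q x := by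
    ext x
    rw [mul_sum]
    refine sum_congr rfl fun m hm ↦ ?_
    rw [mul_left_comm, ← pow_add, Nat.add_sub_cancel' (mem_Icc.mp hm).1]
  have hq0 : q 0 = c n := by
    rw [show q 0 = ∑ m ∈ Icc n p, c m * 0 ^ (m - n) from rfl,
      sum_eq_single_of_mem n (mem_Icc.mpr ⟨le_rfl, hnp⟩) fun m hm hmn ↦ ?_]
    · simp
    · have : m - n ≠ 0 := by have := (mem_Icc.mp hm).1; omega
      simp [zero_pow this]
  have hq : Tendsto q (𝓝 0) (𝓝 (c n)) :=
    hq0 ▸ (continuous_finsetSum _ fun m _ ↦ by fun_prop).tendsto 0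
  simpa [hfactor] using
    (isTheta_refl (fun x : 𝕜 ↦ x ^ n) _).mul (hq.isTheta_const hc one_ne_zero)

theorem integral_sum_mul_pow (s : Finset ℕ) (α : ℕ → ℝ) (δ : ℝ) :
    ∫ ξ in (0 : ℝ)..δ, ∑ m ∈ s, α m * ξ ^ m = δ * ∑ m ∈ s, α m / (m + 1) * δ ^ m := by
  rw [integral_finsetSum fun m _ ↦ (by fun_prop : Continuous _).intervalIntegrable _ _, mul_sum]
  refine sum_congr rfl fun m _ ↦ ?_
  rw [integral_const_mul, integral_pow]
  field_simp
  ring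

theorem isTheta_integral_add_right {E : Type*} [NormedAddCommGroup E] [NormedSpace ℝ E]
    [CompleteSpace E] {g : ℝ → E} (hg : Continuous g) {z : ℝ} (hz : g z ≠ 0) :
    (fun δ ↦ ∫ x in z..z + δ, g x) =Θ[𝓝 0] fun δ ↦ δ := by
  have hderiv : HasDerivAt (fun δ ↦ ∫ x in z..z + δ, g x) (g z) 0 :=
    HasDerivAt.comp_const_add z 0 (by simpa using (hg.integral_hasStrictDerivAt z z).hasDerivAt)
  simpa using hderiv.isTheta_sub hz

/-- Configuration (b): for `φ(ξ₁,ξ₂) = g(ξ₁) f(ξ₂)` with `g(z) ≠ 0` and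
`f(ξ) = ∑_{m=k+1}^{p} α_m ξ^m`, `α_{k+1} ≠ 0`, the L¹-type integral
`∫_z^{z+δ} ∫_0^δ g(ξ₁) f(ξ₂)` is `Θ(δ^{k+3})` as `δ → 0⁺`. -/
theorem lumped_mass_entry_asymptotics_config_b (z : ℝ)
    (g : Polynomial ℝ) (hg : g.eval z ≠ 0)
    (k p : ℕ) (hkp : k < p) (α : ℕ → ℝ) (hα : α (k + 1) ≠ 0) :
    (fun δ : ℝ => ∫ ξ₁ in z..(z + δ), ∫ ξ₂ in (0:ℝ)..δ,
        g.eval ξ₁ * ∑ m ∈ Finset.Icc (k + 1) p, α m * ξ₂ ^ m)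
      =Θ[𝓝[>] (0:ℝ)] (fun δ : ℝ => δ ^ (k + 3)) := by
  simp_rw [integral_const_mul, integral_mul_const, integral_sum_mul_pow]
  have hcoeff : α (k + 1) / ((k + 1 : ℕ) + 1 : ℝ) ≠ 0 := div_ne_zero hα (by positivity)
  have hθ := (isTheta_integral_add_right g.continuous hg).mul <|
    (isTheta_refl (fun δ : ℝ ↦ δ) _).mul
      (isTheta_sum_Icc_mul_pow (n := k + 1) (c := fun m ↦ α m / (m + 1)) hkp hcoeff)
  exact (hθ.mono nhdsWithin_le_nhds).trans_eventuallyEq (.of_forall fun δ ↦ by ring)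
end

section
/- Let k₁ < p₁ and k₂ < p₂ be natural numbers, let α⁽¹⁾, α⁽²⁾ : ℕ → ℝ satisfy α⁽¹⁾_{k₁+1} ≠ 0 and α⁽²⁾_{k₂+1} ≠ 0, and let f₁(ξ) = Σ_{m=k₁+1}^{p₁} α⁽¹⁾_m ξ^m and f₂(ξ) = Σ_{m=k₂+1}^{p₂} α⁽²⁾_m ξ^m. Then, as δ → 0⁺, the squared L² norm ∫_0^δ∫_0^δ (f₁(ξ₁))²(f₂(ξ₂))² dξ₂ dξ₁ is Θ(δ^{2k₁+2k₂+6}). -/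
open Topology Asymptotics

private lemma integral_sq_eq (k p : ℕ) (α : ℕ → ℝ) (δ : ℝ) :
    (∫ ξ in (0:ℝ)..δ, (∑ m ∈ Finset.Icc (k + 1) p, α m * ξ ^ m) ^ 2)
      = δ ^ (2 * k + 3) *
        ∑ m ∈ Finset.Icc (k + 1) p, ∑ n ∈ Finset.Icc (k + 1) p,
          (α m * α n / (m + n + 1)) * δ ^ (m + n - (2 * k + 2)) := by
  have h1 : ∀ ξ : ℝ, (∑ m ∈ Finset.Icc (k + 1) p, α m * ξ ^ m) ^ 2
      = ∑ m ∈ Finset.Icc (k + 1) p, ∑ n ∈ Finset.Icc (k + 1) p,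
          (α m * α n) * ξ ^ (m + n) := by
    intro ξ
    rw [sq, Finset.sum_mul_sum]
    refine Finset.sum_congr rfl fun m _ => Finset.sum_congr rfl fun n _ => ?_
    rw [pow_add]; ring
  simp_rw [h1]
  rw [intervalIntegral.integral_finset_sum]
  · rw [Finset.mul_sum]
    refine Finset.sum_congr rfl fun m hm => ?_
    rw [intervalIntegral.integral_finset_sum]
    · rw [Finset.mul_sum]
      refine Finset.sum_congr rfl fun n hn => ?_
      rw [intervalIntegral.integral_const_mul, integral_pow]
      have hm' := (Finset.mem_Icc.mp hm).1
      have hn' := (Finset.mem_Icc.mp hn).1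
      have he : m + n + 1 = (2 * k + 3) + (m + n - (2 * k + 2)) := by omega
      rw [he, pow_add]
      have : (0 : ℝ) ^ ((2 * k + 3) + (m + n - (2 * k + 2))) = 0 := by
        rw [zero_pow]; omega
      rw [this]
      push_cast
      field_simp
      ring
    · intro n _
      exact (Continuous.intervalIntegrable (by continuity) _ _)
  · intro m _
    exact (Continuous.intervalIntegrable (by continuity) _ _)

private lemma h_at_zero (k p : ℕ) (hkp : k < p) (α : ℕ → ℝ) :
    (∑ m ∈ Finset.Icc (k + 1) p, ∑ n ∈ Finset.Icc (k + 1) p,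
        (α m * α n / (m + n + 1)) * (0:ℝ) ^ (m + n - (2 * k + 2)))
      = α (k + 1) ^ 2 / (2 * k + 3) := by
  have hmem : k + 1 ∈ Finset.Icc (k + 1) p := Finset.mem_Icc.mpr ⟨le_refl _, hkp⟩
  rw [Finset.sum_eq_single_of_mem (k + 1) hmem]
  · rw [Finset.sum_eq_single_of_mem (k + 1) hmem]
    · have : (k + 1) + (k + 1) - (2 * k + 2) = 0 := by omega
      rw [this, pow_zero, mul_one, sq]
      push_cast
      ring_nf
    · intro n hn hne
      have hn' := (Finset.mem_Icc.mp hn).1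
      rw [zero_pow (by omega), mul_zero]
  · intro m hm hme
    have hm' := (Finset.mem_Icc.mp hm).1
    refine Finset.sum_eq_zero fun n hn => ?_
    have hn' := (Finset.mem_Icc.mp hn).1
    rw [zero_pow (by omega), mul_zero]

private lemma theta_one_of_tendsto {h : ℝ → ℝ} {c : ℝ} (hc : c ≠ 0)
    (ht : Filter.Tendsto h (𝓝[>] (0:ℝ)) (𝓝 c)) :
    h =Θ[𝓝[>] (0:ℝ)] (fun _ => (1:ℝ)) := by
  constructor
  · exact ht.isBigO_one ℝ
  · rw [Asymptotics.isBigO_iff]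
    refine ⟨2 / ‖c‖, ?_⟩
    have hlt : ‖c‖ / 2 < ‖c‖ := by
      have : 0 < ‖c‖ := norm_pos_iff.mpr hc
      linarith
    have hev : ∀ᶠ x in 𝓝[>] (0:ℝ), ‖c‖ / 2 < ‖h x‖ :=
      (ht.norm.eventually (eventually_gt_nhds hlt))
    filter_upwards [hev] with x hx
    have hc' : 0 < ‖c‖ := norm_pos_iff.mpr hc
    rw [norm_one]
    rw [div_mul_eq_mul_div, le_div_iff₀ hc']
    nlinarith [hx]

private lemma single_theta (k p : ℕ) (hkp : k < p) (α : ℕ → ℝ) (hα : α (k + 1) ≠ 0) :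
    (fun δ : ℝ => ∫ ξ in (0:ℝ)..δ, (∑ m ∈ Finset.Icc (k + 1) p, α m * ξ ^ m) ^ 2)
      =Θ[𝓝[>] (0:ℝ)] (fun δ : ℝ => δ ^ (2 * k + 3)) := by
  set h : ℝ → ℝ := fun δ => ∑ m ∈ Finset.Icc (k + 1) p, ∑ n ∈ Finset.Icc (k + 1) p,
      (α m * α n / (m + n + 1)) * δ ^ (m + n - (2 * k + 2)) with hh
  have heq : (fun δ : ℝ => ∫ ξ in (0:ℝ)..δ,
      (∑ m ∈ Finset.Icc (k + 1) p, α m * ξ ^ m) ^ 2)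
      = fun δ => δ ^ (2 * k + 3) * h δ := funext fun δ => integral_sq_eq k p α δ
  rw [heq]
  have hcont : Continuous h := by
    apply continuous_finset_sum
    intro m _
    apply continuous_finset_sum
    intro n _
    exact (continuous_const.mul (continuous_pow _))
  have hc : h 0 = α (k + 1) ^ 2 / (2 * k + 3) := h_at_zero k p hkp α
  have hcne : h 0 ≠ 0 := by
    rw [hc]
    apply div_ne_zero (pow_ne_zero _ hα)
    positivity
  have ht : Filter.Tendsto h (𝓝[>] (0:ℝ)) (𝓝 (h 0)) :=
    (hcont.tendsto 0).mono_left nhdsWithin_le_nhds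
  have hΘ : h =Θ[𝓝[>] (0:ℝ)] (fun _ => (1:ℝ)) := theta_one_of_tendsto hcne ht
  have := (isTheta_rfl (f := fun δ : ℝ => δ ^ (2 * k + 3)) (l := 𝓝[>] (0:ℝ))).mul hΘ
  simpa using this

/-- Configuration (c): for `φ(ξ₁,ξ₂) = f₁(ξ₁) f₂(ξ₂)` with
`f_j(ξ) = ∑_{m=k_j+1}^{p_j} α⁽ʲ⁾_m ξ^m`, `α⁽ʲ⁾_{k_j+1} ≠ 0`, the squared `L²` norm
of `φ` on `[0,δ] × [0,δ]` is `Θ(δ^{2k₁+2k₂+6})` as `δ → 0⁺`. -/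
theorem l2_norm_asymptotics_config_c (k₁ p₁ k₂ p₂ : ℕ)
    (hkp₁ : k₁ < p₁) (hkp₂ : k₂ < p₂)
    (α₁ α₂ : ℕ → ℝ) (hα₁ : α₁ (k₁ + 1) ≠ 0) (hα₂ : α₂ (k₂ + 1) ≠ 0) :
    (fun δ : ℝ => ∫ ξ₁ in (0:ℝ)..δ, ∫ ξ₂ in (0:ℝ)..δ,
        (∑ m ∈ Finset.Icc (k₁ + 1) p₁, α₁ m * ξ₁ ^ m) ^ 2 *
        (∑ m ∈ Finset.Icc (k₂ + 1) p₂, α₂ m * ξ₂ ^ m) ^ 2)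
      =Θ[𝓝[>] (0:ℝ)] (fun δ : ℝ => δ ^ (2 * k₁ + 2 * k₂ + 6)) := by
  have hfac : ∀ δ : ℝ,
      (∫ ξ₁ in (0:ℝ)..δ, ∫ ξ₂ in (0:ℝ)..δ,
        (∑ m ∈ Finset.Icc (k₁ + 1) p₁, α₁ m * ξ₁ ^ m) ^ 2 *
        (∑ m ∈ Finset.Icc (k₂ + 1) p₂, α₂ m * ξ₂ ^ m) ^ 2)
      = (∫ ξ₁ in (0:ℝ)..δ, (∑ m ∈ Finset.Icc (k₁ + 1) p₁, α₁ m * ξ₁ ^ m) ^ 2) *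
        (∫ ξ₂ in (0:ℝ)..δ, (∑ m ∈ Finset.Icc (k₂ + 1) p₂, α₂ m * ξ₂ ^ m) ^ 2) := by
    intro δ
    simp_rw [intervalIntegral.integral_const_mul]
    rw [intervalIntegral.integral_mul_const]
  have h1 := single_theta k₁ p₁ hkp₁ α₁ hα₁
  have h2 := single_theta k₂ p₂ hkp₂ α₂ hα₂
  have hmul := h1.mul h2
  have hpow : (fun δ : ℝ => δ ^ (2 * k₁ + 3) * δ ^ (2 * k₂ + 3))
      = fun δ : ℝ => δ ^ (2 * k₁ + 2 * k₂ + 6) := by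
    funext δ
    rw [← pow_add]
    congr 1
    omega
  rw [hpow] at hmul
  have : (fun δ : ℝ => ∫ ξ₁ in (0:ℝ)..δ, ∫ ξ₂ in (0:ℝ)..δ,
        (∑ m ∈ Finset.Icc (k₁ + 1) p₁, α₁ m * ξ₁ ^ m) ^ 2 *
        (∑ m ∈ Finset.Icc (k₂ + 1) p₂, α₂ m * ξ₂ ^ m) ^ 2)
      = fun δ : ℝ =>
        (∫ ξ₁ in (0:ℝ)..δ, (∑ m ∈ Finset.Icc (k₁ + 1) p₁, α₁ m * ξ₁ ^ m) ^ 2) *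
        (∫ ξ₂ in (0:ℝ)..δ, (∑ m ∈ Finset.Icc (k₂ + 1) p₂, α₂ m * ξ₂ ^ m) ^ 2) :=
    funext hfac
  rw [this]
  exact hmul
end
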